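/- Let G be an ADMG with c-components {C_i}, let H be an h-node (a union of c-components), and let 𝒜 ⊆ An_G(H)\H satisfy the modularity condition. Then for any strictly positive SCM inducing G, P(H ∪ 𝒜 | do(Pa(H ∪ 𝒜))) = P_{Pa(H)}(H) · ∏_{C_j^+} P_{Pa(C_j^+)}(C_j^+), where the product ranges over the nonempty intersections C_j^+ = C_j ∩ 𝒜 of c-components of G with 𝒜. Consequently, the c-factor of H is identified as P_{Pa(H)}(H) = P(H ∪ 𝒜 | Pa(H ∪ 𝒜)) / ∏_{C_j^+} P_{Pa(C_j^+)}(C_j^+). -/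

import Mathlib

open Classical

noncomputable section

/-- An acyclic directed mixed graph (ADMG): directed edges (causal) and
bidirected edges (latent confounders). -/
structure ADMG (V : Type) where
  dir : V → V → Prop
  bidir : V → V → Prop
  bidir_symm : ∀ a b, bidir a b → bidir b a
  acyclic : ∀ v, ¬ Relation.TransGen dir v v

namespace ADMG

variable {V : Type} [Fintype V] [DecidableEq V]

/-- Observed parents of a set `W`, outside `W`. -/
def parents (G : ADMG V) (W : Set V) : Set V :=
  {v | v ∉ W ∧ ∃ w ∈ W, G.dir v w}

/-- Observed parents of a finite set `W`, outside `W`. -/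
def parentsF (G : ADMG V) (W : Finset V) : Finset V :=
  Finset.univ.filter fun v => v ∉ W ∧ ∃ w ∈ W, G.dir v w

/-- Ancestors of a set `W` (including `W` itself). -/
def ancestors (G : ADMG V) (W : Set V) : Set V :=
  {v | ∃ w ∈ W, Relation.ReflTransGen G.dir v w}

/-- Ancestors of a finite set `W` (including `W` itself). -/
def ancestorsF (G : ADMG V) (W : Finset V) : Finset V :=
  Finset.univ.filter fun v => ∃ w ∈ W, Relation.ReflTransGen G.dir v w

/-- Bidirected connectivity (paths of bidirected edges). -/
def biConn (G : ADMG V) (a b : V) : Prop :=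
  Relation.ReflTransGen G.bidir a b

/-- `C` is a c-component of `G`: a maximal bidirected-connected set. -/
def isCComponent (G : ADMG V) (C : Set V) : Prop :=
  C.Nonempty ∧ (∀ a ∈ C, ∀ b ∈ C, G.biConn a b) ∧
    ∀ a ∈ C, ∀ b, G.biConn a b → b ∈ C

/-- The set of c-components of `G`. -/
def cComponents (G : ADMG V) : Set (Set V) := {C | G.isCComponent C}

/-- The graph after `do(I)`: incoming directed edges into `I` and bidirected
edges incident to `I` are removed. -/
def doGraph (G : ADMG V) (I : Set V) : ADMG V where
  dir a b := G.dir a b ∧ b ∉ I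
  bidir a b := G.bidir a b ∧ a ∉ I ∧ b ∉ I
  bidir_symm := fun a b h => ⟨G.bidir_symm a b h.1, h.2.2, h.2.1⟩
  acyclic := fun v h => G.acyclic v (Relation.TransGen.mono (fun _ _ hx => hx.1) v v h)

/-- The graph with all outgoing directed edges of `X` removed. -/
def underGraph (G : ADMG V) (X : Set V) : ADMG V where
  dir a b := G.dir a b ∧ a ∉ X
  bidir := G.bidir
  bidir_symm := G.bidir_symm
  acyclic := fun v h => G.acyclic v (Relation.TransGen.mono (fun _ _ hx => hx.1) v v h)

/-- The induced sub-graph on a vertex set `S`. -/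
def induced (G : ADMG V) (S : Set V) : ADMG V where
  dir a b := G.dir a b ∧ a ∈ S ∧ b ∈ S
  bidir a b := G.bidir a b ∧ a ∈ S ∧ b ∈ S
  bidir_symm := fun a b h => ⟨G.bidir_symm a b h.1, h.2.2, h.2.1⟩
  acyclic := fun v h => G.acyclic v (Relation.TransGen.mono (fun _ _ hx => hx.1) v v h)

/-- Adjacency in the mixed graph. -/
def adjacent (G : ADMG V) (a b : V) : Prop := G.dir a b ∨ G.dir b a ∨ G.bidir a b

/-- The edge between `a` and `b` points into `b`. -/
def intoEdge (G : ADMG V) (a b : V) : Prop := G.dir a b ∨ G.bidir a b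

/-- `b` is a collider on the consecutive triple `a, b, c`. -/
def isCollider (G : ADMG V) (a b c : V) : Prop := G.intoEdge a b ∧ G.intoEdge c b

/-- A walk (list of vertices) that is active given the conditioning set `Z`:
non-colliders avoid `Z`, colliders have a descendant in `Z`. -/
def ActiveWalk (G : ADMG V) (Z : Set V) (p : List V) : Prop :=
  p.Chain' G.adjacent ∧
    ∀ i a b c, p[i]? = some a → p[i + 1]? = some b → p[i + 2]? = some c →
      (G.isCollider a b c → ∃ z ∈ Z, Relation.ReflTransGen G.dir b z) ∧
      (¬ G.isCollider a b c → b ∉ Z)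

/-- d-connection of `X` and `Y` given `Z` in the mixed graph (m-connection). -/
def dConnected (G : ADMG V) (X Y Z : Set V) : Prop :=
  ∃ p : List V, G.ActiveWalk Z p ∧
    (∃ x ∈ X, p.head? = some x) ∧ ∃ y ∈ Y, p.getLast? = some y

/-- d-separation of `X` and `Y` given `Z`. -/
def dSeparated (G : ADMG V) (X Y Z : Set V) : Prop := ¬ G.dConnected X Y Z

end ADMG

/-- A (semi-Markovian) structural causal model over the ADMG `G`, with observed
variables valued in `Val`: independent finite latents `L`, mechanisms `f`
reading only observed parents and own latents (shared latents forcing a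
bidirected edge), and the solution map of the structural equations under an
intervention. -/
structure SCM (V : Type) (Val : Type) [Fintype V] [DecidableEq V] [Fintype Val]
    (G : ADMG V) where
  L : Type
  [fintL : Fintype L]
  [decL : DecidableEq L]
  NVal : Type
  [fintN : Fintype NVal]
  ν : L → NVal → ℝ
  ν_nonneg : ∀ l x, 0 ≤ ν l x
  ν_sum : ∀ l, ∑ x, ν l x = 1
  reads : V → L → Prop
  semiMarkov : ∀ v w l, v ≠ w → reads v l → reads w l → G.bidir v w
  f : V → (V → Val) → (L → NVal) → Val
  f_parents : ∀ v x y ω, (∀ p, G.dir p v → x p = y p) → f v x ω = f v y ω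
  f_latents : ∀ v x ω ω', (∀ l, reads v l → ω l = ω' l) → f v x ω = f v x ω'
  solve : Finset V → (V → Val) → (L → NVal) → V → Val
  solve_spec : ∀ I x ω v,
    solve I x ω v = if v ∈ I then x v else f v (solve I x ω) ω

namespace SCM

attribute [instance] SCM.fintL SCM.decL SCM.fintN

variable {V Val : Type} [Fintype V] [DecidableEq V] [Fintype Val] {G : ADMG V}

/-- Probability of a full latent configuration (latents are independent). -/
def μ (M : SCM V Val G) (ω : M.L → M.NVal) : ℝ := ∏ l, M.ν l (ω l)

/-- The interventional distribution `P(y | do(I := x))` (observational for `I = ∅`). -/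
def P (M : SCM V Val G) (I : Finset V) (x : V → Val) (y : V → Val) : ℝ :=
  ∑ ω : M.L → M.NVal, if M.solve I x ω = y then M.μ ω else 0

/-- The marginal interventional distribution `P(S = y|_S | do(I := x))`. -/
def Pm (M : SCM V Val G) (I : Finset V) (x : V → Val) (S : Finset V) (y : V → Val) : ℝ :=
  ∑ z : V → Val, if ∀ v ∈ S, z v = y v then M.P I x z else 0

/-- The conditional distribution `P(S = y|_S | C = y|_C, do(I := x))`. -/
def cond (M : SCM V Val G) (I : Finset V) (x : V → Val) (S C : Finset V)
    (y : V → Val) : ℝ :=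
  M.Pm I x (S ∪ C) y / M.Pm I x C y

/-- Strict positivity of the induced observational distribution. -/
def positive (M : SCM V Val G) : Prop := ∀ x y, 0 < M.P ∅ x y

end SCM

end

/-!
Fix the values `y`. Under `do(Pa(W) := y)` the variables of `W` take the values `y` exactly when
every mechanism of `W`, fed the parent values `y`, returns `y` (the converse direction is
well-founded induction along the acyclic directed edges). So `P_{Pa(W)}(W)` is the probability
of an event of the latents read by `W`. As `H` is a union of c-components disjoint from `𝒜`, the
sets `H` and `C_j ∩ 𝒜` are pairwise disjoint with no bidirected edge between them; a latent read
by two of them would force such an edge, so their events involve disjoint sets of independent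
latents and their probabilities multiply. Positivity makes the product nonzero, and modularity
turns the left-hand side into the observational conditional.
-/

section ProductWeight

variable {L N : Type} [Fintype L] (ν : L → N → ℝ)

theorem prod_weight_mul_prod_weight_piecewise (S : Set L) (a b : L → N) :
    (∏ l, ν l (S.piecewise a b l)) * ∏ l, ν l (S.piecewise b a l) =
      (∏ l, ν l (a l)) * ∏ l, ν l (b l) := by
  simp only [← Finset.prod_mul_distrib]
  refine Finset.prod_congr rfl fun l _ => ?_
  by_cases hl : l ∈ S <;> simp [hl, mul_comm]

variable [DecidableEq L] [Fintype N]

theorem sum_prod_weight_eq_one (hν : ∀ l, ∑ x, ν l x = 1) :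
    ∑ ω : L → N, ∏ l, ν l (ω l) = 1 := by
  rw [← Fintype.prod_sum]
  simp [hν]

theorem sum_mul_mul_prod_weight_of_dependsOn_compl (hν : ∀ l, ∑ x, ν l x = 1) {S : Set L}
    {g h : (L → N) → ℝ} (hg : DependsOn g S) (hh : DependsOn h Sᶜ) :
    ∑ ω, g ω * h ω * ∏ l, ν l (ω l) =
      (∑ ω, g ω * ∏ l, ν l (ω l)) * ∑ ω, h ω * ∏ l, ν l (ω l) := by
  let w : (L → N) → ℝ := fun ω => ∏ l, ν l (ω l)
  have hw : ∑ ω, w ω = 1 := sum_prod_weight_eq_one ν hν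
  -- Exchanging the `Sᶜ`-coordinates of two independent copies `(a, b)` preserves their joint
  -- weight and turns `g a * h b` into `g c * h c` for the first exchanged copy `c`.
  let swap : (L → N) × (L → N) → (L → N) × (L → N) := fun p =>
    (S.piecewise p.1 p.2, S.piecewise p.2 p.1)
  have hswap : Function.Involutive swap := fun p => by
    ext l <;> by_cases hl : l ∈ S <;> simp [swap, hl]
  calc ∑ ω, g ω * h ω * w ω
      = ∑ p : (L → N) × (L → N), g p.1 * h p.1 * w p.1 * w p.2 := by
        simp only [Fintype.sum_prod_type, ← Finset.mul_sum, hw, mul_one]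
    _ = ∑ p : (L → N) × (L → N), g (swap p).1 * h (swap p).1 * w (swap p).1 * w (swap p).2 :=
        (Equiv.sum_comp (hswap.toPerm swap) _).symm
    _ = ∑ p : (L → N) × (L → N), g p.1 * w p.1 * (h p.2 * w p.2) := by
        refine Finset.sum_congr rfl fun p _ => ?_
        have hg' : g (swap p).1 = g p.1 := hg fun l hl => by simp [swap, hl]
        have hh' : h (swap p).1 = h p.2 := hh fun l hl => by
          simp [swap, Set.piecewise_eq_of_notMem _ _ _ hl]
        rw [hg', hh', mul_assoc _ (w _), prod_weight_mul_prod_weight_piecewise]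
        ring
    _ = (∑ ω, g ω * w ω) * ∑ ω, h ω * w ω := by
        rw [Fintype.sum_prod_type, Finset.sum_mul_sum]

theorem sum_prod_mul_prod_weight_of_pairwiseDisjoint (hν : ∀ l, ∑ x, ν l x = 1) {ι : Type}
    (T : Finset ι) {g : ι → (L → N) → ℝ} {S : ι → Set L} (hg : ∀ i ∈ T, DependsOn (g i) (S i))
    (hS : (T : Set ι).PairwiseDisjoint S) :
    ∑ ω, (∏ i ∈ T, g i ω) * ∏ l, ν l (ω l) = ∏ i ∈ T, ∑ ω, g i ω * ∏ l, ν l (ω l) := by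
  induction T using Finset.induction_on with
  | empty => simp [sum_prod_weight_eq_one ν hν]
  | @insert j T hjT ih =>
    have hrest : DependsOn (fun ω => ∏ i ∈ T, g i ω) (S j)ᶜ := fun x y hxy =>
      Finset.prod_congr rfl fun i hi => hg i (Finset.mem_insert_of_mem hi) fun l hl =>
        hxy l fun hlj => Set.disjoint_left.mp
          (hS (by simp [hi]) (by simp) (ne_of_mem_of_not_mem hi hjT)) hl hlj
    simp only [Finset.prod_insert hjT, mul_assoc]
    rw [← ih (fun i hi => hg i (Finset.mem_insert_of_mem hi)) (hS.subset (by simp)),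
      ← sum_mul_mul_prod_weight_of_dependsOn_compl ν hν (hg j (Finset.mem_insert_self j T)) hrest]
    simp only [mul_assoc]

end ProductWeight

namespace ADMG

variable {V : Type}

theorem mem_parentsF [Fintype V] [DecidableEq V] {G : ADMG V} {W : Finset V} {v : V} :
    v ∈ G.parentsF W ↔ v ∉ W ∧ ∃ w ∈ W, G.dir v w := by
  simp [parentsF]

theorem wellFounded_dir [Finite V] (G : ADMG V) : WellFounded G.dir :=
  have : Std.Irrefl (Relation.TransGen G.dir) := ⟨G.acyclic⟩
  Subrelation.wf Relation.TransGen.single (Finite.wellFounded_of_trans_of_irrefl _)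

variable (G : ADMG V)

def BidirClosed (X : Finset V) : Prop := ∀ v ∈ X, ∀ w, G.bidir v w → w ∈ X

def BidirSeparated (X Y : Finset V) : Prop := Disjoint X Y ∧ ∀ v ∈ X, ∀ w ∈ Y, ¬ G.bidir v w

variable {G}

theorem BidirSeparated.symm {X Y : Finset V} (h : G.BidirSeparated X Y) : G.BidirSeparated Y X :=
  ⟨h.1.symm, fun v hv w hw hb => h.2 w hw v hv (G.bidir_symm v w hb)⟩

theorem BidirSeparated.mono_left {X X' Y : Finset V} (h : G.BidirSeparated X Y) (hX : X' ⊆ X) :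
    G.BidirSeparated X' Y :=
  ⟨h.1.mono_left hX, fun v hv => h.2 v (hX hv)⟩

theorem BidirClosed.bidirSeparated {X Y : Finset V} (hX : G.BidirClosed X) (h : Disjoint X Y) :
    G.BidirSeparated X Y :=
  ⟨h, fun v hv w hw hb => Finset.disjoint_left.mp h (hX v hv w hb) hw⟩

theorem isCComponent.bidirClosed {C : Finset V} (hC : G.isCComponent ↑C) : G.BidirClosed C :=
  fun v hv w hb => hC.2.2 v hv w (Relation.ReflTransGen.single hb)

theorem bidirClosed_of_cComponent_subset [DecidableEq V] {ι : Type} {C : ι → Finset V}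
    (hcc : ∀ i, G.isCComponent ↑(C i)) (hcover : ∀ v, ∃ i, v ∈ C i) {H : Finset V}
    (hH : ∀ i, (C i ∩ H).Nonempty → C i ⊆ H) : G.BidirClosed H := fun v hv w hb => by
  obtain ⟨i, hvi⟩ := hcover v
  exact hH i ⟨v, Finset.mem_inter.mpr ⟨hvi, hv⟩⟩ ((hcc i).bidirClosed v hvi w hb)

end ADMG

namespace SCM

variable {V Val : Type} [Fintype V] [DecidableEq V] [Fintype Val] {G : ADMG V}
  (M : SCM V Val G)

def ReproducesOn (W : Finset V) (y : V → Val) (ω : M.L → M.NVal) : Prop :=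
  ∀ v ∈ W, M.f v y ω = y v

def latentsOf (W : Finset V) : Set M.L := {l | ∃ v ∈ W, M.reads v l}

theorem μ_nonneg (ω : M.L → M.NVal) : 0 ≤ M.μ ω :=
  Finset.prod_nonneg fun l _ => M.ν_nonneg l (ω l)

theorem Pm_eq_sum_latent (I : Finset V) (x y : V → Val) (S : Finset V) :
    M.Pm I x S y = ∑ ω, if ∀ v ∈ S, M.solve I x ω v = y v then M.μ ω else 0 := by
  simp only [Pm, P]
  rw [← Finset.sum_filter, Finset.sum_comm]
  refine Finset.sum_congr rfl fun ω _ => ?_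
  simp only [Finset.sum_ite_eq, Finset.mem_filter, Finset.mem_univ, true_and]

theorem solve_parentsF_eq_of_dir {W : Finset V} {y : V → Val} {ω : M.L → M.NVal} {p v : V}
    (hv : v ∈ W) (hpv : G.dir p v) (hp : p ∉ W) : M.solve (G.parentsF W) y ω p = y p := by
  rw [M.solve_spec]
  exact if_pos (ADMG.mem_parentsF.mpr ⟨hp, v, hv, hpv⟩)

theorem solve_parentsF_eq_iff (W : Finset V) (y : V → Val) (ω : M.L → M.NVal) :
    (∀ v ∈ W, M.solve (G.parentsF W) y ω v = y v) ↔ M.ReproducesOn W y ω := by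
  have hf : ∀ v ∈ W, (∀ p, G.dir p v → p ∈ W → M.solve (G.parentsF W) y ω p = y p) →
      M.f v (M.solve (G.parentsF W) y ω) ω = M.f v y ω := fun v hv h =>
    M.f_parents v _ y ω fun p hpv =>
      if hp : p ∈ W then h p hpv hp else M.solve_parentsF_eq_of_dir hv hpv hp
  have hsolve : ∀ v ∈ W,
      M.solve (G.parentsF W) y ω v = M.f v (M.solve (G.parentsF W) y ω) ω := fun v hv => by
    rw [M.solve_spec, if_neg fun h => (ADMG.mem_parentsF.mp h).1 hv]
  refine ⟨fun h v hv => ?_, fun h v => ?_⟩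
  · rw [← hf v hv fun p _ hp => h p hp, ← hsolve v hv, h v hv]
  · induction v using G.wellFounded_dir.induction with
    | h v ih =>
      intro hv
      rw [hsolve v hv, hf v hv fun p hpv hp => ih p hpv hp, h v hv]

theorem Pm_parentsF_self (W : Finset V) (y : V → Val) :
    M.Pm (G.parentsF W) y W y = ∑ ω, (if M.ReproducesOn W y ω then 1 else 0) * M.μ ω := by
  simp only [Pm_eq_sum_latent, solve_parentsF_eq_iff, boole_mul]

theorem reproducesOn_of_solve_empty_eq {y : V → Val} {ω : M.L → M.NVal}
    (h : M.solve ∅ y ω = y) (W : Finset V) : M.ReproducesOn W y ω := fun v _ => by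
  have := M.solve_spec ∅ y ω v
  rwa [if_neg (Finset.notMem_empty v), h, eq_comm] at this

theorem P_empty_le_Pm_parentsF_self (W : Finset V) (y : V → Val) :
    M.P ∅ y y ≤ M.Pm (G.parentsF W) y W y := by
  rw [Pm_parentsF_self]
  refine Finset.sum_le_sum fun ω _ => ?_
  split_ifs with h h'
  · simp
  · exact absurd (M.reproducesOn_of_solve_empty_eq h W) h'
  · simpa using M.μ_nonneg ω
  · simp

theorem Pm_parentsF_self_pos (hpos : M.positive) (W : Finset V) (y : V → Val) :
    0 < M.Pm (G.parentsF W) y W y :=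
  (hpos y y).trans_le (M.P_empty_le_Pm_parentsF_self W y)

theorem dependsOn_latentsOf (W : Finset V) (y : V → Val) :
    DependsOn (fun ω => if M.ReproducesOn W y ω then (1 : ℝ) else 0) (M.latentsOf W) :=
  fun ω ω' h => by
    have hf : ∀ v ∈ W, M.f v y ω = M.f v y ω' := fun v hv =>
      M.f_latents v y ω ω' fun l hl => h l ⟨v, hv, hl⟩
    simp only [ReproducesOn]
    congr 1
    exact propext <| forall₂_congr fun v hv => by rw [hf v hv]

theorem disjoint_latentsOf {W W' : Finset V} (h : G.BidirSeparated W W') :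
    Disjoint (M.latentsOf W) (M.latentsOf W') :=
  Set.disjoint_left.mpr fun l ⟨v, hv, hvl⟩ ⟨w, hw, hwl⟩ =>
    have hvw : v ≠ w := fun hvw => Finset.disjoint_left.mp h.1 hv (hvw ▸ hw)
    h.2 v hv w hw (M.semiMarkov v w l hvw hvl hwl)

theorem Pm_parentsF_biUnion {ι : Type} (T : Finset ι) (W : ι → Finset V)
    (hW : (T : Set ι).Pairwise fun i j => G.BidirSeparated (W i) (W j)) (y : V → Val) :
    M.Pm (G.parentsF (T.biUnion W)) y (T.biUnion W) y =
      ∏ i ∈ T, M.Pm (G.parentsF (W i)) y (W i) y := by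
  have hsplit : ∀ ω, (if M.ReproducesOn (T.biUnion W) y ω then (1 : ℝ) else 0) =
      ∏ i ∈ T, if M.ReproducesOn (W i) y ω then 1 else 0 := fun ω => by
    rw [Finset.prod_boole]
    exact if_congr ⟨fun h i hi v hv => h v (Finset.mem_biUnion.mpr ⟨i, hi, hv⟩),
      fun h v hv => (Finset.mem_biUnion.mp hv).elim fun i ⟨hi, hvi⟩ => h i hi v hvi⟩ rfl rfl
  simp only [Pm_parentsF_self, hsplit]
  exact sum_prod_mul_prod_weight_of_pairwiseDisjoint M.ν M.ν_sum T
    (fun i _ => M.dependsOn_latentsOf (W i) y) (hW.mono' fun i j h => M.disjoint_latentsOf h)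

theorem Pm_parentsF_union_biUnion {ι : Type} (X : Finset V) (T : Finset ι) (W : ι → Finset V)
    (hX : ∀ i ∈ T, G.BidirSeparated X (W i))
    (hW : (T : Set ι).Pairwise fun i j => G.BidirSeparated (W i) (W j)) (y : V → Val) :
    M.Pm (G.parentsF (X ∪ T.biUnion W)) y (X ∪ T.biUnion W) y =
      M.Pm (G.parentsF X) y X y * ∏ i ∈ T, M.Pm (G.parentsF (W i)) y (W i) y := by
  have hunion : (Finset.insertNone T).biUnion (fun o => o.elim X W) = X ∪ T.biUnion W := by
    ext v
    simp [Option.exists]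
  have hsep : (Finset.insertNone T : Set (Option ι)).Pairwise
      fun o o' => G.BidirSeparated (o.elim X W) (o'.elim X W) := by
    rintro (_ | i) hi (_ | j) hj hij
    · exact absurd rfl hij
    · exact hX j (by simpa using hj)
    · exact (hX i (by simpa using hi)).symm
    · exact hW (by simpa using hi) (by simpa using hj) (by simpa using hij)
  rw [← hunion, M.Pm_parentsF_biUnion _ _ hsep y, Finset.prod_insertNone]
  rfl

end SCM

/-- under the modularity condition,
`P(H ∪ 𝒜 | do(Pa(H ∪ 𝒜))) = P_{Pa(H)}(H) · ∏_j P_{Pa(C_j^+)}(C_j^+)` where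
`C_j^+ = C_j ∩ 𝒜` ranges over the nonempty intersections of the c-components
with `𝒜`; consequently the c-factor of `H` is identified as the conditional
divided by that product. -/
theorem hnode_c_factor_identified_via_modularity
    {V Val : Type} [Fintype V] [DecidableEq V] [Fintype Val]
    (G : ADMG V) {n : ℕ} (C : Fin n → Finset V)
    (hcc : ∀ i, G.isCComponent ↑(C i))
    (hdisj : ∀ i j, i ≠ j → Disjoint (C i) (C j))
    (hcover : ∀ v : V, ∃ i, v ∈ C i)
    (H A : Finset V)
    (hH : ∀ i, (C i ∩ H).Nonempty → C i ⊆ H)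
    (hA : ↑A ⊆ G.ancestors ↑H \ ↑H)
    (M : SCM V Val G) (hpos : M.positive)
    (hmod : ∀ y : V → Val,
      M.Pm (G.parentsF (H ∪ A)) y (H ∪ A) y =
        M.cond ∅ y (H ∪ A) (G.parentsF (H ∪ A)) y)
    (y : V → Val) :
    (M.Pm (G.parentsF (H ∪ A)) y (H ∪ A) y =
      M.Pm (G.parentsF H) y H y *
        ∏ i ∈ Finset.univ.filter fun i => (C i ∩ A).Nonempty,
          M.Pm (G.parentsF (C i ∩ A)) y (C i ∩ A) y) ∧
    (M.Pm (G.parentsF H) y H y =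
      M.cond ∅ y (H ∪ A) (G.parentsF (H ∪ A)) y /
        ∏ i ∈ Finset.univ.filter fun i => (C i ∩ A).Nonempty,
          M.Pm (G.parentsF (C i ∩ A)) y (C i ∩ A) y) := by
  set T := Finset.univ.filter fun i => (C i ∩ A).Nonempty
  have hHA : Disjoint H A := Finset.disjoint_right.mpr fun a ha => (hA ha).2
  have hA_eq : T.biUnion (fun i => C i ∩ A) = A := by
    ext v
    refine ⟨fun hv => ?_, fun hvA => ?_⟩
    · obtain ⟨i, -, hvi⟩ := Finset.mem_biUnion.mp hv
      exact (Finset.mem_inter.mp hvi).2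
    · obtain ⟨i, hvi⟩ := hcover v
      have hvi : v ∈ C i ∩ A := Finset.mem_inter.mpr ⟨hvi, hvA⟩
      exact Finset.mem_biUnion.mpr ⟨i, Finset.mem_filter.mpr ⟨Finset.mem_univ i, v, hvi⟩, hvi⟩
  have hHsep : ∀ i ∈ T, G.BidirSeparated H (C i ∩ A) := fun i _ =>
    (ADMG.bidirClosed_of_cComponent_subset hcc hcover hH).bidirSeparated
      (hHA.mono_right Finset.inter_subset_right)
  have hCsep : (T : Set (Fin n)).Pairwise fun i j => G.BidirSeparated (C i ∩ A) (C j ∩ A) :=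
    fun i _ j _ hij => ((hcc i).bidirClosed.bidirSeparated
      ((hdisj i j hij).mono_right Finset.inter_subset_left)).mono_left Finset.inter_subset_left
  have hfactor := M.Pm_parentsF_union_biUnion H T _ hHsep hCsep y
  rw [hA_eq] at hfactor
  have hprod_pos : 0 < ∏ i ∈ T, M.Pm (G.parentsF (C i ∩ A)) y (C i ∩ A) y :=
    Finset.prod_pos fun i _ => M.Pm_parentsF_self_pos hpos _ y
  refine ⟨hfactor, ?_⟩
  rw [← hmod y, hfactor, mul_div_cancel_right₀ _ hprod_pos.ne']
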